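/- For parameters λ = (x, y, r, φ, N) with N > 0, define d(λ) = (√2 x, √2 y)ᵀ ∈ ℝ², μ(λ) = 1/(2N+1), and the 2×2 real symmetric matrix σ(λ) = s₁σ_x + s₂I + s₃σ_z with s₁ = −(2N+1) sinh(2r) sin φ, s₂ = (2N+1) cosh(2r), s₃ = (2N+1) sinh(2r) cos φ, where σ_x = [[0,1],[1,0]] and σ_z = [[1,0],[0,−1]]. Define the 5×5 matrix Q by Q_{αβ} = (1/2) Tr[(σ⁻¹∂_ασ)(σ⁻¹∂_βσ)]/(1+μ²) + 2(∂_αμ)(∂_βμ)/(1−μ⁴) + 2(∂_αd)ᵀσ⁻¹(∂_βd). Then, in the ordering (x, y, r, φ, N), Q_{xx} = 4μ(cosh 2r − cos φ sinh 2r), Q_{yy} = 4μ(cosh 2r + cos φ sinh 2r), Q_{xy} = Q_{yx} = 4μ sinh(2r) sin φ, Q_{rr} = 4/(1+μ²), Q_{φφ} = sinh²(2r)/(1+μ²), Q_{NN} = 4μ²/(1−μ²), and all other entries vanish. -/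

import Mathlib

open Matrix

/-- First-moments vector `d(λ) = (√2 x, √2 y)` of the single-mode Gaussian model, with
parameters `v = (x, y, r, φ, N)`. -/
noncomputable def gaussD (v : Fin 5 → ℝ) : Fin 2 → ℝ :=
  ![Real.sqrt 2 * v 0, Real.sqrt 2 * v 1]

/-- Purity `μ(λ) = 1/(2N+1)` of the single-mode Gaussian model. -/
noncomputable def gaussMu (v : Fin 5 → ℝ) : ℝ := 1 / (2 * v 4 + 1)

/-- Covariance matrix `σ(λ) = s₁σₓ + s₂I + s₃σ_z` of the single-mode Gaussian model. -/
noncomputable def gaussSigma (v : Fin 5 → ℝ) : Matrix (Fin 2) (Fin 2) ℝ :=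
  (-(2 * v 4 + 1) * Real.sinh (2 * v 2) * Real.sin (v 3)) • !![(0 : ℝ), 1; 1, 0]
    + ((2 * v 4 + 1) * Real.cosh (2 * v 2)) • (1 : Matrix (Fin 2) (Fin 2) ℝ)
    + ((2 * v 4 + 1) * Real.sinh (2 * v 2) * Real.cos (v 3)) • !![(1 : ℝ), 0; 0, -1]

/-- Partial derivative `∂_α d` of the first-moments vector. -/
noncomputable def pdD (α : Fin 5) (v : Fin 5 → ℝ) : Fin 2 → ℝ :=
  fun i => deriv (fun t => gaussD (Function.update v α t) i) (v α)

/-- Partial derivative `∂_α μ` of the purity. -/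
noncomputable def pdMu (α : Fin 5) (v : Fin 5 → ℝ) : ℝ :=
  deriv (fun t => gaussMu (Function.update v α t)) (v α)

/-- Partial derivative `∂_α σ` of the covariance matrix. -/
noncomputable def pdSigma (α : Fin 5) (v : Fin 5 → ℝ) : Matrix (Fin 2) (Fin 2) ℝ :=
  Matrix.of fun i j => deriv (fun t => gaussSigma (Function.update v α t) i j) (v α)

/-- The SLD quantum Fisher information matrix of the single-mode Gaussian model:
`Q_{αβ} = (1/2)Tr[(σ⁻¹∂_ασ)(σ⁻¹∂_βσ)]/(1+μ²) + 2(∂_αμ)(∂_βμ)/(1−μ⁴) + 2(∂_αd)ᵀσ⁻¹(∂_βd)`. -/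
noncomputable def gaussQ (v : Fin 5 → ℝ) : Matrix (Fin 5) (Fin 5) ℝ :=
  Matrix.of fun α β =>
    (1 / 2) * ((gaussSigma v)⁻¹ * pdSigma α v * ((gaussSigma v)⁻¹ * pdSigma β v)).trace
        / (1 + gaussMu v ^ 2)
      + 2 * pdMu α v * pdMu β v / (1 - gaussMu v ^ 4)
      + 2 * (pdD α v ⬝ᵥ (gaussSigma v)⁻¹.mulVec (pdD β v))

open Matrix Real

section
variable (x y r φ N : ℝ)

lemma upd (α : Fin 5) (t : ℝ) : Function.update ![x,y,r,φ,N] α t =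
    ![if α = 0 then t else x, if α = 1 then t else y, if α = 2 then t else r,
      if α = 3 then t else φ, if α = 4 then t else N] := by
  funext i; fin_cases i <;> fin_cases α <;> simp [Function.update]

lemma sigma_eq : gaussSigma ![x,y,r,φ,N] =
    !![(2*N+1)*Real.cosh (2*r) + (2*N+1)*Real.sinh (2*r)*Real.cos φ,
       -((2*N+1)*Real.sinh (2*r)*Real.sin φ);
       -((2*N+1)*Real.sinh (2*r)*Real.sin φ),
       (2*N+1)*Real.cosh (2*r) - (2*N+1)*Real.sinh (2*r)*Real.cos φ] := by
  ext i j; fin_cases i <;> fin_cases j <;>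
    simp [gaussSigma, Matrix.one_apply] <;> ring
end
section
open Matrix Real
variable (x y r φ N : ℝ)

lemma pdD_eq (α : Fin 5) : pdD α ![x,y,r,φ,N] =
    (if α = 0 then ![Real.sqrt 2, 0] else if α = 1 then ![0, Real.sqrt 2] else 0) := by
  funext i
  fin_cases α <;> fin_cases i <;>
    simp [pdD, upd, gaussD] <;>
    simpa using (HasDerivAt.deriv (by simpa using (hasDerivAt_id _).const_mul (Real.sqrt 2)))

lemma pdMu_eq (hN : 0 < N) (α : Fin 5) : pdMu α ![x,y,r,φ,N] =
    if α = 4 then -2 / (2*N+1)^2 else 0 := by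
  have hne : 2*N+1 ≠ 0 := by positivity
  have h : HasDerivAt (fun t : ℝ => (2*t+1)⁻¹) (-2/(2*N+1)^2) N := by
    have := (((hasDerivAt_id N).const_mul 2).add_const 1).inv (by simpa using hne)
    simpa [Pi.inv_def] using this
  fin_cases α <;> simp only [pdMu, upd] <;> simp [gaussMu, one_div]
  exact h.deriv
end
section
open Matrix Real
variable (x y r φ N : ℝ)

lemma upd2 (t : ℝ) : Function.update ![x,y,r,φ,N] 2 t = ![x,y,t,φ,N] := by
  funext i; fin_cases i <;> simp [Function.update]
lemma upd3 (t : ℝ) : Function.update ![x,y,r,φ,N] 3 t = ![x,y,r,t,N] := by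
  funext i; fin_cases i <;> simp [Function.update]
lemma upd4 (t : ℝ) : Function.update ![x,y,r,φ,N] 4 t = ![x,y,r,φ,t] := by
  funext i; fin_cases i <;> simp [Function.update]

private lemma hdc (u : ℝ) : HasDerivAt (fun t => Real.cosh (2*t)) (2*Real.sinh (2*u)) u := by
  simpa [mul_comm] using ((hasDerivAt_id u).const_mul 2).cosh
private lemma hds (u : ℝ) : HasDerivAt (fun t => Real.sinh (2*t)) (2*Real.cosh (2*u)) u := by
  simpa [mul_comm] using ((hasDerivAt_id u).const_mul 2).sinh

lemma pdSigma2 : pdSigma 2 ![x,y,r,φ,N] =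
    !![(2*N+1)*(2*Real.sinh (2*r)) + (2*N+1)*(2*Real.cosh (2*r))*Real.cos φ,
       -((2*N+1)*(2*Real.cosh (2*r))*Real.sin φ);
       -((2*N+1)*(2*Real.cosh (2*r))*Real.sin φ),
       (2*N+1)*(2*Real.sinh (2*r)) - (2*N+1)*(2*Real.cosh (2*r))*Real.cos φ] := by
  have key : ∀ t : ℝ, gaussSigma (Function.update ![x,y,r,φ,N] 2 t) =
      !![(2*N+1)*Real.cosh (2*t) + (2*N+1)*Real.sinh (2*t)*Real.cos φ,
         -((2*N+1)*Real.sinh (2*t)*Real.sin φ);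
         -((2*N+1)*Real.sinh (2*t)*Real.sin φ),
         (2*N+1)*Real.cosh (2*t) - (2*N+1)*Real.sinh (2*t)*Real.cos φ] := fun t => by
    rw [upd2, sigma_eq]
  ext i j
  fin_cases i <;> fin_cases j <;>
    simp only [pdSigma, Matrix.of_apply, key, Matrix.cons_val_zero, Matrix.cons_val_one,
      Matrix.head_cons, Matrix.head_fin_const, Fin.isValue,
      show (![x,y,r,φ,N] : Fin 5 → ℝ) 2 = r from rfl]
  · exact (((hdc r).const_mul _).add (((hds r).const_mul _).mul_const _)).deriv
  · exact ((((hds r).const_mul _).mul_const _).neg).deriv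
  · exact ((((hds r).const_mul _).mul_const _).neg).deriv
  · exact (((hdc r).const_mul _).sub (((hds r).const_mul _).mul_const _)).deriv
end
section
open Matrix Real
variable (x y r φ N : ℝ)

lemma pdSigma01 (α : Fin 5) (hα : α = 0 ∨ α = 1) : pdSigma α ![x,y,r,φ,N] = 0 := by
  have k0 : ∀ t : ℝ, gaussSigma (Function.update ![x,y,r,φ,N] 0 t) = gaussSigma ![x,y,r,φ,N] := by
    intro t
    have : Function.update ![x,y,r,φ,N] 0 t = ![t,y,r,φ,N] := by
      funext i; fin_cases i <;> simp [Function.update]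
    rw [this, sigma_eq, sigma_eq]
  have k1 : ∀ t : ℝ, gaussSigma (Function.update ![x,y,r,φ,N] 1 t) = gaussSigma ![x,y,r,φ,N] := by
    intro t
    have : Function.update ![x,y,r,φ,N] 1 t = ![x,t,r,φ,N] := by
      funext i; fin_cases i <;> simp [Function.update]
    rw [this, sigma_eq, sigma_eq]
  rcases hα with rfl | rfl <;> ext i j <;>
    simp only [pdSigma, Matrix.of_apply, k0, k1, deriv_const', Matrix.zero_apply]

lemma pdSigma3 : pdSigma 3 ![x,y,r,φ,N] =
    !![-((2*N+1)*Real.sinh (2*r)*Real.sin φ), -((2*N+1)*Real.sinh (2*r)*Real.cos φ);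
       -((2*N+1)*Real.sinh (2*r)*Real.cos φ), (2*N+1)*Real.sinh (2*r)*Real.sin φ] := by
  have key : ∀ t : ℝ, gaussSigma (Function.update ![x,y,r,φ,N] 3 t) =
      !![(2*N+1)*Real.cosh (2*r) + (2*N+1)*Real.sinh (2*r)*Real.cos t,
         -((2*N+1)*Real.sinh (2*r)*Real.sin t);
         -((2*N+1)*Real.sinh (2*r)*Real.sin t),
         (2*N+1)*Real.cosh (2*r) - (2*N+1)*Real.sinh (2*r)*Real.cos t] := fun t => by
    rw [upd3, sigma_eq]
  ext i j
  fin_cases i <;> fin_cases j <;>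
    simp only [pdSigma, Matrix.of_apply, key, Matrix.cons_val_zero, Matrix.cons_val_one,
      Matrix.head_cons, Matrix.head_fin_const, Fin.isValue,
      show (![x,y,r,φ,N] : Fin 5 → ℝ) 3 = φ from rfl]
  · have h : HasDerivAt (fun t => (2*N+1)*Real.cosh (2*r) + (2*N+1)*Real.sinh (2*r)*Real.cos t)
        (-((2*N+1)*Real.sinh (2*r)*Real.sin φ)) φ := by
      have := ((Real.hasDerivAt_cos φ).const_mul ((2*N+1)*Real.sinh (2*r))).const_add
        ((2*N+1)*Real.cosh (2*r))
      exact this.congr_deriv (by ring)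
    exact h.deriv
  · have h : HasDerivAt (fun t => -((2*N+1)*Real.sinh (2*r)*Real.sin t))
        (-((2*N+1)*Real.sinh (2*r)*Real.cos φ)) φ := by
      have := (((Real.hasDerivAt_sin φ).const_mul ((2*N+1)*Real.sinh (2*r)))).neg
      exact this.congr_deriv (by ring)
    exact h.deriv
  · have h : HasDerivAt (fun t => -((2*N+1)*Real.sinh (2*r)*Real.sin t))
        (-((2*N+1)*Real.sinh (2*r)*Real.cos φ)) φ := by
      have := (((Real.hasDerivAt_sin φ).const_mul ((2*N+1)*Real.sinh (2*r)))).neg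
      exact this.congr_deriv (by ring)
    exact h.deriv
  · have h : HasDerivAt (fun t => (2*N+1)*Real.cosh (2*r) - (2*N+1)*Real.sinh (2*r)*Real.cos t)
        ((2*N+1)*Real.sinh (2*r)*Real.sin φ) φ := by
      have := ((Real.hasDerivAt_cos φ).const_mul ((2*N+1)*Real.sinh (2*r))).const_sub
        ((2*N+1)*Real.cosh (2*r))
      exact this.congr_deriv (by ring)
    exact h.deriv

lemma pdSigma4 : pdSigma 4 ![x,y,r,φ,N] =
    !![2*Real.cosh (2*r) + 2*Real.sinh (2*r)*Real.cos φ, -(2*Real.sinh (2*r)*Real.sin φ);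
       -(2*Real.sinh (2*r)*Real.sin φ), 2*Real.cosh (2*r) - 2*Real.sinh (2*r)*Real.cos φ] := by
  have key : ∀ t : ℝ, gaussSigma (Function.update ![x,y,r,φ,N] 4 t) =
      !![(2*t+1)*Real.cosh (2*r) + (2*t+1)*Real.sinh (2*r)*Real.cos φ,
         -((2*t+1)*Real.sinh (2*r)*Real.sin φ);
         -((2*t+1)*Real.sinh (2*r)*Real.sin φ),
         (2*t+1)*Real.cosh (2*r) - (2*t+1)*Real.sinh (2*r)*Real.cos φ] := fun t => by
    rw [upd4, sigma_eq]
  have hlin : ∀ c : ℝ, HasDerivAt (fun t : ℝ => (2*t+1)*c) (2*c) N := fun c => by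
    simpa using (((hasDerivAt_id N).const_mul 2).add_const 1).mul_const c
  ext i j
  fin_cases i <;> fin_cases j <;>
    simp only [pdSigma, Matrix.of_apply, key, Matrix.cons_val_zero, Matrix.cons_val_one,
      Matrix.head_cons, Matrix.head_fin_const, Fin.isValue,
      show (![x,y,r,φ,N] : Fin 5 → ℝ) 4 = N from rfl]
  · have h : HasDerivAt (fun t => (2*t+1)*Real.cosh (2*r) + (2*t+1)*Real.sinh (2*r)*Real.cos φ)
        (2*Real.cosh (2*r) + 2*Real.sinh (2*r)*Real.cos φ) N := by
      have := (hlin (Real.cosh (2*r))).add ((hlin (Real.sinh (2*r))).mul_const (Real.cos φ))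
      exact this.congr_deriv (by ring)
    exact h.deriv
  · have h : HasDerivAt (fun t => -((2*t+1)*Real.sinh (2*r)*Real.sin φ))
        (-(2*Real.sinh (2*r)*Real.sin φ)) N := by
      have := ((hlin (Real.sinh (2*r))).mul_const (Real.sin φ)).neg
      exact this.congr_deriv (by ring)
    exact h.deriv
  · have h : HasDerivAt (fun t => -((2*t+1)*Real.sinh (2*r)*Real.sin φ))
        (-(2*Real.sinh (2*r)*Real.sin φ)) N := by
      have := ((hlin (Real.sinh (2*r))).mul_const (Real.sin φ)).neg
      exact this.congr_deriv (by ring)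
    exact h.deriv
  · have h : HasDerivAt (fun t => (2*t+1)*Real.cosh (2*r) - (2*t+1)*Real.sinh (2*r)*Real.cos φ)
        (2*Real.cosh (2*r) - 2*Real.sinh (2*r)*Real.cos φ) N := by
      have := (hlin (Real.cosh (2*r))).sub ((hlin (Real.sinh (2*r))).mul_const (Real.cos φ))
      exact this.congr_deriv (by ring)
    exact h.deriv
end
section
open Matrix Real
variable (x y r φ N : ℝ)

lemma sigma_inv (hN : 0 < N) : (gaussSigma ![x,y,r,φ,N])⁻¹ =
    (((2*N+1)^2)⁻¹ : ℝ) •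
      !![(2*N+1)*Real.cosh (2*r) - (2*N+1)*Real.sinh (2*r)*Real.cos φ,
         (2*N+1)*Real.sinh (2*r)*Real.sin φ;
         (2*N+1)*Real.sinh (2*r)*Real.sin φ,
         (2*N+1)*Real.cosh (2*r) + (2*N+1)*Real.sinh (2*r)*Real.cos φ] := by
  have hn : (2*N+1) ≠ 0 := by positivity
  apply Matrix.inv_eq_right_inv
  rw [sigma_eq]
  ext i j
  have h1 := Real.cosh_sq_sub_sinh_sq (2*r)
  have h2 := Real.sin_sq_add_cos_sq φ
  fin_cases i <;> fin_cases j
  · simp [Matrix.mul_apply, Fin.sum_univ_two, Matrix.one_apply, Matrix.smul_apply]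
    field_simp
    linear_combination h1 - Real.sinh (2*r)^2 * h2
  · simp [Matrix.mul_apply, Fin.sum_univ_two, Matrix.one_apply, Matrix.smul_apply]
    field_simp
    ring
  · simp [Matrix.mul_apply, Fin.sum_univ_two, Matrix.one_apply, Matrix.smul_apply]
    field_simp
    ring
  · simp [Matrix.mul_apply, Fin.sum_univ_two, Matrix.one_apply, Matrix.smul_apply]
    field_simp
    linear_combination h1 - Real.sinh (2*r)^2 * h2
end
section
open Matrix Real
variable (x y r φ N : ℝ)

lemma K2 (hN : 0 < N) : (gaussSigma ![x,y,r,φ,N])⁻¹ * pdSigma 2 ![x,y,r,φ,N] =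
    !![2*Real.cos φ, -(2*Real.sin φ); -(2*Real.sin φ), -(2*Real.cos φ)] := by
  have hn : (2*N+1) ≠ 0 := by positivity
  have h1 := Real.cosh_sq_sub_sinh_sq (2*r)
  have h2 := Real.sin_sq_add_cos_sq φ
  rw [sigma_inv x y r φ N hN, pdSigma2]
  ext i j
  fin_cases i <;> fin_cases j
  · simp [Matrix.mul_apply, Fin.sum_univ_two, Matrix.smul_apply]
    field_simp
    linear_combination Real.cos φ * h1 - Real.cosh (2*r)*Real.sinh (2*r) * h2
  · simp [Matrix.mul_apply, Fin.sum_univ_two, Matrix.smul_apply]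
    field_simp
    linear_combination (-Real.sin φ) * h1 + (0:ℝ) * h2
  · simp [Matrix.mul_apply, Fin.sum_univ_two, Matrix.smul_apply]
    field_simp
    linear_combination (-Real.sin φ) * h1 + (0:ℝ) * h2
  · simp [Matrix.mul_apply, Fin.sum_univ_two, Matrix.smul_apply]
    field_simp
    linear_combination (-Real.cos φ) * h1 - Real.cosh (2*r)*Real.sinh (2*r) * h2

lemma K3 (hN : 0 < N) : (gaussSigma ![x,y,r,φ,N])⁻¹ * pdSigma 3 ![x,y,r,φ,N] =
    !![-(Real.sinh (2*r)*Real.cosh (2*r)*Real.sin φ),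
       Real.sinh (2*r)*(Real.sinh (2*r) - Real.cosh (2*r)*Real.cos φ);
       -(Real.sinh (2*r)*(Real.cosh (2*r)*Real.cos φ + Real.sinh (2*r))),
       Real.sinh (2*r)*Real.cosh (2*r)*Real.sin φ] := by
  have hn : (2*N+1) ≠ 0 := by positivity
  have h1 := Real.cosh_sq_sub_sinh_sq (2*r)
  have h2 := Real.sin_sq_add_cos_sq φ
  rw [sigma_inv x y r φ N hN, pdSigma3]
  ext i j
  fin_cases i <;> fin_cases j
  · simp [Matrix.mul_apply, Fin.sum_univ_two, Matrix.smul_apply]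
    field_simp
    linear_combination (0:ℝ) * h1 + (0:ℝ) * h2
  · simp [Matrix.mul_apply, Fin.sum_univ_two, Matrix.smul_apply]
    field_simp
    linear_combination (0:ℝ) * h1 + Real.sinh (2*r)^2 * h2
  · simp [Matrix.mul_apply, Fin.sum_univ_two, Matrix.smul_apply]
    field_simp
    linear_combination (0:ℝ) * h1 - Real.sinh (2*r)^2 * h2
  · simp [Matrix.mul_apply, Fin.sum_univ_two, Matrix.smul_apply]
    field_simp
    linear_combination (0:ℝ) * h1 + (0:ℝ) * h2

lemma K4 (hN : 0 < N) : (gaussSigma ![x,y,r,φ,N])⁻¹ * pdSigma 4 ![x,y,r,φ,N] =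
    !![2/(2*N+1), 0; 0, 2/(2*N+1)] := by
  have hn : (2*N+1) ≠ 0 := by positivity
  have h1 := Real.cosh_sq_sub_sinh_sq (2*r)
  have h2 := Real.sin_sq_add_cos_sq φ
  rw [sigma_inv x y r φ N hN, pdSigma4]
  ext i j
  fin_cases i <;> fin_cases j
  · simp [Matrix.mul_apply, Fin.sum_univ_two, Matrix.smul_apply]
    field_simp
    linear_combination h1 - Real.sinh (2*r)^2 * h2
  · simp [Matrix.mul_apply, Fin.sum_univ_two, Matrix.smul_apply]
    field_simp
    linear_combination (0:ℝ) * h1 + (0:ℝ) * h2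
  · simp [Matrix.mul_apply, Fin.sum_univ_two, Matrix.smul_apply]
    field_simp
    linear_combination (0:ℝ) * h1 + (0:ℝ) * h2
  · simp [Matrix.mul_apply, Fin.sum_univ_two, Matrix.smul_apply]
    field_simp
    linear_combination h1 - Real.sinh (2*r)^2 * h2
end
set_option maxHeartbeats 1000000 in
/-- The SLD quantum Fisher information matrix of the full five-parameter single-mode
Gaussian model, in the ordering `(x, y, r, φ, N)`, with `μ = 1/(2N+1)`. -/
theorem stmt16 (x y r φ N : ℝ) (hN : 0 < N) :
    gaussQ ![x, y, r, φ, N] =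
      !![4 * (1 / (2 * N + 1)) * (Real.cosh (2 * r) - Real.cos φ * Real.sinh (2 * r)),
           4 * (1 / (2 * N + 1)) * Real.sinh (2 * r) * Real.sin φ, 0, 0, 0;
         4 * (1 / (2 * N + 1)) * Real.sinh (2 * r) * Real.sin φ,
           4 * (1 / (2 * N + 1)) * (Real.cosh (2 * r) + Real.cos φ * Real.sinh (2 * r)),
           0, 0, 0;
         0, 0, 4 / (1 + (1 / (2 * N + 1)) ^ 2), 0, 0;
         0, 0, 0, Real.sinh (2 * r) ^ 2 / (1 + (1 / (2 * N + 1)) ^ 2), 0;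
         0, 0, 0, 0, 4 * (1 / (2 * N + 1)) ^ 2 / (1 - (1 / (2 * N + 1)) ^ 2)] := by
  have hn : (2*N+1) ≠ 0 := by positivity
  have hone : (1:ℝ) < 2*N+1 := by linarith
  have hd2 : ((2*N+1):ℝ)^2 + 1 ≠ 0 := by positivity
  have hd4 : ((2*N+1):ℝ)^4 - 1 ≠ 0 := by nlinarith [one_lt_pow₀ hone (n := 4) (by norm_num)]
  have hd4' : ((2*N+1):ℝ)^2 - 1 ≠ 0 := by nlinarith [one_lt_pow₀ hone (n := 2) (by norm_num)]
  have pm := pdMu_eq x y r φ N hN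
  have pd := pdD_eq x y r φ N
  have pd0 : pdD 0 ![x,y,r,φ,N] = ![Real.sqrt 2, 0] := by rw [pd]; simp
  have pd1 : pdD 1 ![x,y,r,φ,N] = ![0, Real.sqrt 2] := by rw [pd]; simp
  have pd2 : pdD 2 ![x,y,r,φ,N] = 0 := by rw [pd]; simp
  have pd3 : pdD 3 ![x,y,r,φ,N] = 0 := by rw [pd]; simp
  have pd4 : pdD 4 ![x,y,r,φ,N] = 0 := by rw [pd]; simp
  have pm0 : pdMu 0 ![x,y,r,φ,N] = 0 := by rw [pm]; simp
  have pm1 : pdMu 1 ![x,y,r,φ,N] = 0 := by rw [pm]; simp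
  have pm2 : pdMu 2 ![x,y,r,φ,N] = 0 := by rw [pm]; simp
  have pm3 : pdMu 3 ![x,y,r,φ,N] = 0 := by rw [pm]; simp
  have pm4 : pdMu 4 ![x,y,r,φ,N] = -2/(2*N+1)^2 := by rw [pm]; simp
  have p0 := pdSigma01 x y r φ N 0 (Or.inl rfl)
  have p1 := pdSigma01 x y r φ N 1 (Or.inr rfl)
  have h1 := Real.cosh_sq_sub_sinh_sq (2*r)
  have h2 := Real.sin_sq_add_cos_sq φ
  have h3 : Real.sqrt 2 * Real.sqrt 2 = 2 := Real.mul_self_sqrt (by norm_num)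
  ext α β
  fin_cases α <;> fin_cases β <;>
    simp only [Fin.zero_eta, Fin.mk_one, Fin.reduceFinMk, Fin.isValue] <;>
    simp only [gaussQ, Matrix.of_apply, p0, p1, K2 x y r φ N hN, K3 x y r φ N hN,
      K4 x y r φ N hN, pd0, pd1, pd2, pd3, pd4, pm0, pm1, pm2, pm3, pm4, gaussMu,
      show (![x,y,r,φ,N] : Fin 5 → ℝ) 4 = N from rfl, Matrix.mul_zero, Matrix.zero_mul,
      Matrix.trace_zero, Matrix.mulVec_zero, dotProduct_zero, zero_dotProduct,
      mul_zero, zero_mul, zero_div, add_zero, zero_add] <;>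
    (try simp only [sigma_inv x y r φ N hN]) <;>
    norm_num [Matrix.trace_fin_two, Matrix.mul_apply, Matrix.smul_apply, Fin.sum_univ_two,
      Matrix.mulVec, dotProduct, Matrix.cons_val_zero, Matrix.cons_val_one,
      Matrix.head_cons, Matrix.head_fin_const, Matrix.cons_val, Matrix.cons_val_two,
      Matrix.cons_val_three, Matrix.cons_val_four, Matrix.tail_cons] <;>
    (try field_simp) <;>
    first
      | rfl
      | ring1
      | (left; ring1)
      | (linear_combination ((4:ℝ)*Real.sinh (2*r)^2*Real.sin φ^2 + (4:ℝ)*Real.sinh (2*r)^2*Real.cos φ^2 + (24:ℝ)*N*Real.sinh (2*r)^2*Real.sin φ^2 + (24:ℝ)*N*Real.sinh (2*r)^2*Real.cos φ^2 + (56:ℝ)*N^2*Real.sinh (2*r)^2*Real.sin φ^2 + (56:ℝ)*N^2*Real.sinh (2*r)^2*Real.cos φ^2 + (64:ℝ)*N^3*Real.sinh (2*r)^2*Real.sin φ^2 + (64:ℝ)*N^3*Real.sinh (2*r)^2*Real.cos φ^2 + (32:ℝ)*N^4*Real.sinh (2*r)^2*Real.sin φ^2 + (32:ℝ)*N^4*Real.sinh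 (2*r)^2*Real.cos φ^2) * h1 + ((4:ℝ)*Real.sinh (2*r)^2 + (4:ℝ)*Real.sinh (2*r)^4 + (24:ℝ)*N*Real.sinh (2*r)^2 + (24:ℝ)*N*Real.sinh (2*r)^4 + (56:ℝ)*N^2*Real.sinh (2*r)^2 + (56:ℝ)*N^2*Real.sinh (2*r)^4 + (64:ℝ)*N^3*Real.sinh (2*r)^2 + (64:ℝ)*N^3*Real.sinh (2*r)^4 + (32:ℝ)*N^4*Real.sinh (2*r)^2 + (32:ℝ)*N^4*Real.sinh (2*r)^4) * h2 + (0:ℝ) * h3)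
      | (linear_combination (0:ℝ) * h1 + ((16:ℝ) + (96:ℝ)*N + (224:ℝ)*N^2 + (256:ℝ)*N^3 + (128:ℝ)*N^4) * h2 + (0:ℝ) * h3)
      | (linear_combination (0:ℝ) * h1 + (0:ℝ) * h2 + ((-2:ℝ)*Real.sinh (2*r)*Real.cos φ + (2:ℝ)*Real.cosh (2*r) + (-8:ℝ)*N*Real.sinh (2*r)*Real.cos φ + (8:ℝ)*N*Real.cosh (2*r) + (-8:ℝ)*N^2*Real.sinh (2*r)*Real.cos φ + (8:ℝ)*N^2*Real.cosh (2*r)) * h3)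
      | (linear_combination (0:ℝ) * h1 + (0:ℝ) * h2 + ((2:ℝ)*Real.sinh (2*r)*Real.cos φ + (2:ℝ)*Real.cosh (2*r) + (8:ℝ)*N*Real.sinh (2*r)*Real.cos φ + (8:ℝ)*N*Real.cosh (2*r) + (8:ℝ)*N^2*Real.sinh (2*r)*Real.cos φ + (8:ℝ)*N^2*Real.cosh (2*r)) * h3)
      | (linear_combination (0:ℝ) * h1 + (0:ℝ) * h2 + ((2:ℝ)*Real.sinh (2*r)*Real.sin φ + (8:ℝ)*N*Real.sinh (2*r)*Real.sin φ + (8:ℝ)*N^2*Real.sinh (2*r)*Real.sin φ) * h3)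
      | (linear_combination (2*Real.cosh (2*r) - 2*Real.sinh (2*r)*Real.cos φ) * h3)
      | (linear_combination (2*Real.cosh (2*r) + 2*Real.sinh (2*r)*Real.cos φ) * h3)
      | (linear_combination (2*Real.sinh (2*r)*Real.sin φ) * h3)
      | (linear_combination 4 * h2)
      | (linear_combination 2*Real.sinh (2*r)^2 * h1 + 2*Real.sinh (2*r)^2*Real.cosh (2*r)^2 * h2)
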